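/- arXiv:1306.2403 — 3 statements merged into one kernel-verified Lean document; each statement's English description precedes it below -/
import Mathlib

section
/- The self-adjoint matrix x = w₀·(I⊗I) + (w·σ)⊗I + I⊗(r·σ), with w₀ ∈ ℝ and w, r ∈ ℝ³, is positive semidefinite if and only if ‖w‖ + ‖r‖ ≤ w₀. -/
open Matrix Complex
open scoped ComplexOrder

noncomputable def sigma1 : Matrix (Fin 2) (Fin 2) ℂ := !![0, 1; 1, 0]
noncomputable def sigma2 : Matrix (Fin 2) (Fin 2) ℂ := !![0, -I; I, 0]
noncomputable def sigma3 : Matrix (Fin 2) (Fin 2) ℂ := !![1, 0; 0, -1]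

noncomputable def pauli (w : Fin 3 → ℂ) : Matrix (Fin 2) (Fin 2) ℂ :=
  w 0 • sigma1 + w 1 • sigma2 + w 2 • sigma3

open Kronecker

/-
Write `P = w·σ`, `Q = r·σ`. Both are Hermitian with `P² = ‖w‖²` and `Q² = ‖r‖²`, so
`det (P - c) = c² - ‖w‖²` and `-‖w‖` is an eigenvalue of `P`. On a product `u ⊗ s` of eigenvectors
for `-‖w‖` and `-‖r‖` the matrix acts as `w₀ - ‖w‖ - ‖r‖`, which therefore has to be nonnegative.
Conversely `x = (w₀ - ‖w‖ - ‖r‖) + (‖w‖ + P) ⊗ 1 + 1 ⊗ (‖r‖ + Q)` is a sum of positive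
semidefinite matrices, because `a + P = (a + P)² / (2a)` whenever `P² = a²`.
-/

section

variable {m n : Type*} {𝕜 : Type*} [RCLike 𝕜]

theorem mul_fst_snd_ne_zero {α : Type*} [MulZeroClass α] [NoZeroDivisors α] {u : m → α}
    {s : n → α} (hu : u ≠ 0) (hs : s ≠ 0) : (fun q : m × n => u q.1 * s q.2) ≠ 0 := by
  obtain ⟨i, hi⟩ := Function.ne_iff.mp hu
  obtain ⟨j, hj⟩ := Function.ne_iff.mp hs
  exact Function.ne_iff.mpr ⟨(i, j), mul_ne_zero hi hj⟩

variable [Fintype m] [Fintype n]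

theorem Matrix.PosSemidef.nonneg_of_mulVec_eq_smul {A : Matrix n n 𝕜} (hA : A.PosSemidef)
    {v : n → 𝕜} (hv : v ≠ 0) {c : 𝕜} (hAv : A *ᵥ v = c • v) : 0 ≤ c := by
  have hpos : 0 < star v ⬝ᵥ v := dotProduct_star_self_pos_iff.mpr hv
  have hquad : 0 ≤ c * (star v ⬝ᵥ v) := by
    simpa [hAv, dotProduct_smul] using hA.dotProduct_mulVec_nonneg v
  simpa [hpos.ne'] using mul_nonneg hquad (inv_pos.mpr hpos).le

theorem Matrix.kronecker_mulVec_mul {α : Type*} [CommSemiring α] (A : Matrix m m α)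
    (B : Matrix n n α) (u : m → α) (s : n → α) :
    (A ⊗ₖ B) *ᵥ (fun q => u q.1 * s q.2) = fun q => (A *ᵥ u) q.1 * (B *ᵥ s) q.2 := by
  ext q
  simp only [mulVec, dotProduct, kroneckerMap_apply, Fintype.sum_prod_type, Finset.sum_mul_sum]
  exact Finset.sum_congr rfl fun i _ => Finset.sum_congr rfl fun j _ => by ring

theorem Matrix.kroneckerSum_mulVec_mul {α : Type*} [CommRing α] [DecidableEq m] [DecidableEq n]
    {A : Matrix m m α} {B : Matrix n n α} {u : m → α} {s : n → α} {a b : α}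
    (hu : A *ᵥ u = a • u) (hs : B *ᵥ s = b • s) (c : α) :
    (c • ((1 : Matrix m m α) ⊗ₖ (1 : Matrix n n α)) + A ⊗ₖ 1 + 1 ⊗ₖ B) *ᵥ
      (fun q => u q.1 * s q.2) = (c + a + b) • fun q => u q.1 * s q.2 := by
  ext q
  simp only [add_mulVec, smul_mulVec, kronecker_mulVec_mul, one_mulVec, hu, hs, Pi.add_apply,
    Pi.smul_apply, smul_eq_mul]
  ring

variable [DecidableEq n]

theorem Matrix.IsHermitian.posSemidef_smul_one_add {P : Matrix n n 𝕜} (hP : P.IsHermitian)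
    {a : ℝ} (ha : 0 ≤ a) (hP2 : P * P = (a ^ 2 : 𝕜) • 1) : ((a : 𝕜) • 1 + P).PosSemidef := by
  rcases ha.eq_or_lt with rfl | ha
  · have : P = 0 := conjTranspose_mul_self_eq_zero.mp (by simpa [hP.eq] using hP2)
    simpa [this] using PosSemidef.zero
  · have hsq : ((a : 𝕜) • 1 + P)ᴴ * ((a : 𝕜) • 1 + P) = (2 * a) • ((a : 𝕜) • 1 + P) := by
      rw [conjTranspose_add, hP.eq, conjTranspose_smul, conjTranspose_one, RCLike.star_def,
        RCLike.conj_ofReal]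
      simp only [add_mul, mul_add, smul_mul, mul_smul_comm, one_mul, mul_one, hP2]
      module
    have := (posSemidef_conjTranspose_mul_self ((a : 𝕜) • 1 + P)).smul
      (a := (2 * a)⁻¹) (by positivity)
    rwa [hsq, smul_smul, inv_mul_cancel₀ (by positivity), one_smul] at this

end

theorem pauli_isHermitian (w : Fin 3 → ℝ) : (pauli fun i => (w i : ℂ)).IsHermitian := by
  ext i j
  fin_cases i <;> fin_cases j <;> simp [pauli, sigma1, sigma2, sigma3]

theorem pauli_mul_self (w : Fin 3 → ℂ) : pauli w * pauli w = (∑ i, w i ^ 2) • 1 := by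
  ext i j
  fin_cases i <;> fin_cases j <;> simp [pauli, sigma1, sigma2, sigma3, Fin.sum_univ_three] <;>
    ring_nf <;> simp [Complex.I_sq]

theorem det_pauli_sub_smul_one (w : Fin 3 → ℂ) (c : ℂ) :
    (pauli w - c • 1).det = c ^ 2 - ∑ i, w i ^ 2 := by
  simp [det_fin_two, pauli, sigma1, sigma2, sigma3, Fin.sum_univ_three]
  ring_nf
  simp [Complex.I_sq]
  ring

theorem exists_pauli_mulVec_eq_smul (w : Fin 3 → ℂ) {c : ℂ} (hc : c ^ 2 = ∑ i, w i ^ 2) :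
    ∃ v ≠ 0, pauli w *ᵥ v = c • v := by
  obtain ⟨v, hv, hker⟩ := exists_mulVec_eq_zero_iff.mpr
    ((det_pauli_sub_smul_one w c).trans (sub_eq_zero.mpr hc))
  refine ⟨v, hv, ?_⟩
  rwa [sub_mulVec, smul_mulVec, one_mulVec, sub_eq_zero] at hker

theorem stmt_5 (w₀ : ℝ) (w r : Fin 3 → ℝ) :
    ((w₀ : ℂ) • ((1 : Matrix (Fin 2) (Fin 2) ℂ) ⊗ₖ (1 : Matrix (Fin 2) (Fin 2) ℂ))
        + pauli (fun i => (w i : ℂ)) ⊗ₖ (1 : Matrix (Fin 2) (Fin 2) ℂ)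
        + (1 : Matrix (Fin 2) (Fin 2) ℂ) ⊗ₖ pauli (fun i => (r i : ℂ))).PosSemidef ↔
      Real.sqrt (∑ i, w i ^ 2) + Real.sqrt (∑ i, r i ^ 2) ≤ w₀ := by
  have sq_norm (v : Fin 3 → ℝ) : ((√(∑ i, v i ^ 2) : ℝ) : ℂ) ^ 2 = ∑ i, (v i : ℂ) ^ 2 := by
    rw [← ofReal_pow, Real.sq_sqrt (by positivity)]
    push_cast
    rfl
  set a := √(∑ i, w i ^ 2)
  set b := √(∑ i, r i ^ 2)
  constructor
  · intro hX
    obtain ⟨u, hu0, hu⟩ := exists_pauli_mulVec_eq_smul _ (c := -(a : ℂ)) (by rw [neg_sq, sq_norm])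
    obtain ⟨s, hs0, hs⟩ := exists_pauli_mulVec_eq_smul _ (c := -(b : ℂ)) (by rw [neg_sq, sq_norm])
    have hmin := hX.nonneg_of_mulVec_eq_smul (mul_fst_snd_ne_zero hu0 hs0)
      (kroneckerSum_mulVec_mul hu hs _)
    rw [← sub_eq_add_neg, ← sub_eq_add_neg, ← ofReal_sub, ← ofReal_sub, zero_le_real] at hmin
    linarith
  · intro h
    have hdecomp :
        (w₀ : ℂ) • ((1 : Matrix (Fin 2) (Fin 2) ℂ) ⊗ₖ (1 : Matrix (Fin 2) (Fin 2) ℂ))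
            + pauli (fun i => (w i : ℂ)) ⊗ₖ 1 + 1 ⊗ₖ pauli (fun i => (r i : ℂ))
          = ((w₀ - a - b : ℝ) : ℂ) • (1 : Matrix (Fin 2 × Fin 2) (Fin 2 × Fin 2) ℂ)
            + ((a : ℂ) • 1 + pauli (fun i => (w i : ℂ))) ⊗ₖ 1
            + 1 ⊗ₖ ((b : ℂ) • 1 + pauli (fun i => (r i : ℂ))) := by
      rw [add_kronecker, kronecker_add, smul_kronecker, kronecker_smul, one_kronecker_one]
      push_cast
      module
    have hP (v : Fin 3 → ℝ) : ((√(∑ i, v i ^ 2) : ℂ) • 1 + pauli fun i => (v i : ℂ)).PosSemidef :=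
      (pauli_isHermitian v).posSemidef_smul_one_add (Real.sqrt_nonneg _)
        (by rw [pauli_mul_self, ← sq_norm]; rfl)
    rw [hdecomp]
    exact ((PosSemidef.one.smul (zero_le_real.mpr (by linarith))).add
      ((hP w).kronecker .one)).add (PosSemidef.one.kronecker (hP r))
end

section
/- Let B be a 3×3 real matrix and define the linear map Δ: M₂(ℂ) → M₂(ℂ)⊗M₂(ℂ) by Δ(w₀I + w·σ) = w₀(I⊗I) + (Bw·σ)⊗I + I⊗(Bw·σ). Then Δ is positive (maps positive semidefinite matrices to positive semidefinite matrices) if and only if the operator norm of B satisfies ‖B‖ ≤ 1/2. -/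
open Matrix Complex
open scoped ComplexOrder

open Kronecker

/-- The map `Δ` determined by the 3×3 real matrix `B`, given on the decomposition
`x = w₀ I + w·σ` (with real coefficients) by
`Δ(x) = w₀ (I⊗I) + (Bw·σ)⊗I + I⊗(Bw·σ)`. -/
noncomputable def DeltaB (B : Matrix (Fin 3) (Fin 3) ℝ) (w₀ : ℝ) (w : Fin 3 → ℝ) :
    Matrix (Fin 2 × Fin 2) (Fin 2 × Fin 2) ℂ :=
  (w₀ : ℂ) • ((1 : Matrix (Fin 2) (Fin 2) ℂ) ⊗ₖ (1 : Matrix (Fin 2) (Fin 2) ℂ))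
    + pauli (fun i => (B.mulVec w i : ℂ)) ⊗ₖ (1 : Matrix (Fin 2) (Fin 2) ℂ)
    + (1 : Matrix (Fin 2) (Fin 2) ℂ) ⊗ₖ pauli (fun i => (B.mulVec w i : ℂ))

/-!
Put `P = (Bw)·σ`: it is Hermitian, traceless, and `P² = s² 1` with `s = ‖Bw‖`. For such a `P`,
`a 1 + P ≥ 0` iff `s ≤ a`: for `s > 0`, `s 1 + P` is `(2s)⁻¹` times its own square, and the columns
of `s 1 - P` are eigenvectors of `P` for the eigenvalue `-s`.

If `‖Bw‖ ≤ ‖w‖ / 2 ≤ w₀ / 2`, then `Δ(x) = A ⊗ 1 + 1 ⊗ A` with `A = (w₀ / 2) 1 + P ≥ 0`.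
Conversely, for `Q = s 1 - P` one has `Δ(‖w‖ 1 + w·σ) (Q ⊗ Q) = (‖w‖ - 2s) (Q ⊗ Q)`, and since
`‖w‖ 1 + w·σ ≥ 0`, positivity of `Δ` forces `2s ≤ ‖w‖`.
-/

namespace Matrix

variable {n : Type*} [Fintype n]

theorem PosSemidef.nonneg_of_mul_eq_smul {M Q : Matrix n n ℂ} (hM : M.PosSemidef) {c : ℝ}
    (hMQ : M * Q = (c : ℂ) • Q) (hQ : Q ≠ 0) : 0 ≤ c := by
  classical
  obtain ⟨i, hi⟩ : ∃ i, Q *ᵥ Pi.single i 1 ≠ 0 := by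
    by_contra! h
    exact hQ (ext_of_mulVec_single fun i => by rw [h i, zero_mulVec])
  have hform := hM.dotProduct_mulVec_nonneg (Q *ᵥ Pi.single i 1)
  rw [mulVec_mulVec, hMQ, smul_mulVec, dotProduct_smul, smul_eq_mul] at hform
  have hpos := (Complex.lt_def.mp (dotProduct_star_self_pos_iff.mpr hi)).1
  have hre := (Complex.le_def.mp hform).1
  rw [zero_re, re_ofReal_mul] at hre
  exact nonneg_of_mul_nonneg_left hre hpos

variable [DecidableEq n] {P : Matrix n n ℂ} {r : ℝ}

theorem mul_smul_one_sub_of_mul_self (hP : P * P = ((r ^ 2 : ℝ) : ℂ) • 1) :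
    P * ((r : ℂ) • 1 - P) = ((-r : ℝ) : ℂ) • ((r : ℂ) • 1 - P) := by
  rw [mul_sub, mul_smul_comm, mul_one, hP]
  push_cast
  module

theorem trace_smul_one_sub : ((r : ℂ) • 1 - P).trace = r * Fintype.card n - P.trace := by
  simp [trace_sub]

theorem IsHermitian.posSemidef_smul_one_add_s6 (hP : P.IsHermitian) (hr : 0 ≤ r)
    (hP2 : P * P = ((r ^ 2 : ℝ) : ℂ) • 1) : ((r : ℂ) • 1 + P).PosSemidef := by
  rcases hr.eq_or_lt with rfl | hr
  · have : Pᴴ * P = 0 := by simpa [hP.eq] using hP2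
    simp [conjTranspose_mul_self_eq_zero.mp this, PosSemidef.zero]
  set N := (r : ℂ) • 1 + P
  have hN : Nᴴ = N := by simp [N, conjTranspose_add, hP.eq]
  have hN2 : N * N = ((2 * r : ℝ) : ℂ) • N := by
    simp only [N, mul_add, add_mul, smul_mul_assoc, mul_smul_comm, one_mul, mul_one, hP2]
    push_cast
    module
  have : N = ((2 * r)⁻¹ : ℝ) • (Nᴴ * N) := by
    rw [hN, hN2, ← Complex.coe_smul, smul_smul, ← Complex.ofReal_mul,
      inv_mul_cancel₀ (by positivity), Complex.ofReal_one, one_smul]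
  rw [this]
  exact (posSemidef_conjTranspose_mul_self N).smul (by positivity)

theorem le_of_posSemidef_smul_one_add [Nonempty n] (hr : 0 ≤ r)
    (hP2 : P * P = ((r ^ 2 : ℝ) : ℂ) • 1) (htr : P.trace = 0) {a : ℝ}
    (h : ((a : ℂ) • 1 + P).PosSemidef) : r ≤ a := by
  rcases hr.eq_or_lt with rfl | hr
  · have := h.trace_nonneg
    simp only [trace_add, trace_smul, trace_one, htr, add_zero, smul_eq_mul] at this
    exact nonneg_of_mul_nonneg_left (by exact_mod_cast this) (by simp [Fintype.card_pos])
  have hMQ : ((a : ℂ) • 1 + P) * ((r : ℂ) • 1 - P) = ((a - r : ℝ) : ℂ) • ((r : ℂ) • 1 - P) := by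
    rw [add_mul, mul_smul_one_sub_of_mul_self hP2, smul_mul_assoc, one_mul, ← add_smul]
    push_cast
    ring_nf
  have hQ : (r : ℂ) • 1 - P ≠ 0 := fun h0 => by
    have := trace_smul_one_sub (r := r) (P := P)
    rw [h0, trace_zero, htr] at this
    simp [hr.ne'] at this
  linarith [h.nonneg_of_mul_eq_smul hMQ hQ]

theorem posSemidef_smul_one_add_iff [Nonempty n] (hP : P.IsHermitian) (hr : 0 ≤ r)
    (hP2 : P * P = ((r ^ 2 : ℝ) : ℂ) • 1) (htr : P.trace = 0) (a : ℝ) :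
    ((a : ℂ) • 1 + P).PosSemidef ↔ r ≤ a := by
  refine ⟨le_of_posSemidef_smul_one_add hr hP2 htr, fun hra => ?_⟩
  have hsplit : (a : ℂ) • 1 + P = ((a - r : ℝ) : ℂ) • 1 + ((r : ℂ) • 1 + P) := by
    push_cast
    module
  rw [hsplit, Complex.coe_smul]
  exact (PosSemidef.one.smul (sub_nonneg.mpr hra)).add (hP.posSemidef_smul_one_add_s6 hr hP2)

end Matrix

theorem pauli_eq (w : Fin 3 → ℂ) : pauli w = !![w 2, w 0 - I * w 1; w 0 + I * w 1, -w 2] := by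
  ext i j
  fin_cases i <;> fin_cases j <;> simp [pauli, sigma1, sigma2, sigma3] <;> ring

theorem trace_pauli (w : Fin 3 → ℂ) : (pauli w).trace = 0 := by
  simp [pauli_eq, trace_fin_two]

theorem isHermitian_pauli_ofReal (a : Fin 3 → ℝ) : (pauli fun i => (a i : ℂ)).IsHermitian := by
  rw [pauli_eq]
  ext i j
  fin_cases i <;> fin_cases j <;> simp [conjTranspose_apply, Complex.ext_iff]

theorem pauli_ofReal_mul_self (a : Fin 3 → ℝ) :
    (pauli fun i => (a i : ℂ)) * (pauli fun i => (a i : ℂ))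
      = ((√(∑ i, a i ^ 2) ^ 2 : ℝ) : ℂ) • 1 := by
  rw [pauli_mul_self, Real.sq_sqrt (by positivity)]
  push_cast
  rfl

theorem posSemidef_smul_one_add_pauli_iff (a₀ : ℝ) (a : Fin 3 → ℝ) :
    ((a₀ : ℂ) • 1 + pauli fun i => (a i : ℂ)).PosSemidef ↔ √(∑ i, a i ^ 2) ≤ a₀ :=
  posSemidef_smul_one_add_iff (isHermitian_pauli_ofReal a) (Real.sqrt_nonneg _)
    (pauli_ofReal_mul_self a) (trace_pauli _) a₀

theorem DeltaB_eq_kronecker_add (B : Matrix (Fin 3) (Fin 3) ℝ) (w₀ : ℝ) (w : Fin 3 → ℝ) :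
    DeltaB B w₀ w = (((w₀ / 2 : ℝ) : ℂ) • 1 + pauli fun i => ((B *ᵥ w) i : ℂ)) ⊗ₖ 1
      + 1 ⊗ₖ (((w₀ / 2 : ℝ) : ℂ) • 1 + pauli fun i => ((B *ᵥ w) i : ℂ)) := by
  rw [DeltaB, add_kronecker, kronecker_add, smul_kronecker, kronecker_smul]
  push_cast
  module

theorem DeltaB_mul_kronecker_self {B : Matrix (Fin 3) (Fin 3) ℝ} {w₀ : ℝ} {w : Fin 3 → ℝ}
    {Q : Matrix (Fin 2) (Fin 2) ℂ} {μ : ℂ} (hQ : (pauli fun i => ((B *ᵥ w) i : ℂ)) * Q = μ • Q) :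
    DeltaB B w₀ w * (Q ⊗ₖ Q) = ((w₀ : ℂ) + 2 * μ) • (Q ⊗ₖ Q) := by
  rw [DeltaB, add_mul, add_mul, smul_mul_assoc, ← mul_kronecker_mul, ← mul_kronecker_mul,
    ← mul_kronecker_mul, hQ, one_mul, smul_kronecker, kronecker_smul]
  module

theorem sqrt_sum_mulVec_sq_le_of_posSemidef_DeltaB {B : Matrix (Fin 3) (Fin 3) ℝ}
    {w : Fin 3 → ℝ} (hΔ : (DeltaB B √(∑ i, w i ^ 2) w).PosSemidef) :
    √(∑ i, (B *ᵥ w) i ^ 2) ≤ 1 / 2 * √(∑ i, w i ^ 2) := by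
  set r := √(∑ i, w i ^ 2)
  set s := √(∑ i, (B *ᵥ w) i ^ 2) with hs_def
  have hs0 : 0 ≤ s := Real.sqrt_nonneg _
  rcases hs0.eq_or_lt with hs | hs
  · rw [← hs]
    positivity
  set Q := (s : ℂ) • 1 - pauli fun i => ((B *ᵥ w) i : ℂ)
  have hQQ : Q ⊗ₖ Q ≠ 0 := fun h0 => by
    have := congrArg trace h0
    rw [trace_kronecker, trace_smul_one_sub, trace_pauli] at this
    simp [hs.ne'] at this
  have hMQ : DeltaB B r w * (Q ⊗ₖ Q) = ((r - 2 * s : ℝ) : ℂ) • (Q ⊗ₖ Q) := by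
    rw [DeltaB_mul_kronecker_self (mul_smul_one_sub_of_mul_self (pauli_ofReal_mul_self _)),
      ← hs_def]
    congr 1
    push_cast
    ring
  linarith [hΔ.nonneg_of_mul_eq_smul hMQ hQQ]

theorem stmt_6 (B : Matrix (Fin 3) (Fin 3) ℝ) :
    (∀ (w₀ : ℝ) (w : Fin 3 → ℝ),
        ((w₀ : ℂ) • (1 : Matrix (Fin 2) (Fin 2) ℂ) + pauli (fun i => (w i : ℂ))).PosSemidef →
          (DeltaB B w₀ w).PosSemidef) ↔
      ∀ w : Fin 3 → ℝ,
        Real.sqrt (∑ i, B.mulVec w i ^ 2) ≤ (1 / 2) * Real.sqrt (∑ i, w i ^ 2) := by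
  constructor
  · intro hΔ w
    exact sqrt_sum_mulVec_sq_le_of_posSemidef_DeltaB
      (hΔ _ w ((posSemidef_smul_one_add_pauli_iff _ w).mpr le_rfl))
  · intro hB w₀ w hw
    have hA := (posSemidef_smul_one_add_pauli_iff (w₀ / 2) (B *ᵥ w)).mpr
      (by linarith [hB w, (posSemidef_smul_one_add_pauli_iff w₀ w).mp hw])
    rw [DeltaB_eq_kronecker_add]
    exact (hA.kronecker PosSemidef.one).add (PosSemidef.one.kronecker hA)
end

section
/- Suppose real vectors a, b, c, A, B, Γ ∈ ℝ³ satisfy: ‖a‖=‖b‖=‖c‖=1; ‖A‖²=‖B‖²=‖Γ‖²=2; ⟨a,b⟩=⟨a,c⟩=⟨b,c⟩=0; ⟨a,A⟩=⟨b,A⟩=0; ⟨a,Γ⟩=⟨c,Γ⟩=0; ⟨b,B⟩=⟨c,B⟩=0; and ⟨b,Γ⟩+⟨A,B⟩=0. Then a contradiction follows; i.e., no such vectors exist. -/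
theorem stmt_19 (a b c A B Γ : Fin 3 → ℝ)
    (ha : ∑ i, a i ^ 2 = 1) (hb : ∑ i, b i ^ 2 = 1) (hc : ∑ i, c i ^ 2 = 1)
    (hA : ∑ i, A i ^ 2 = 2) (hB : ∑ i, B i ^ 2 = 2) (hΓ : ∑ i, Γ i ^ 2 = 2)
    (hab : ∑ i, a i * b i = 0) (hac : ∑ i, a i * c i = 0) (hbc : ∑ i, b i * c i = 0)
    (haA : ∑ i, a i * A i = 0) (hbA : ∑ i, b i * A i = 0)
    (haΓ : ∑ i, a i * Γ i = 0) (hcΓ : ∑ i, c i * Γ i = 0)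
    (hbB : ∑ i, b i * B i = 0) (hcB : ∑ i, c i * B i = 0)
    (hlast : (∑ i, b i * Γ i) + ∑ i, A i * B i = 0) :
    False := by
  simp only [Fin.sum_univ_three] at *
  have h1 : (Matrix.of ![a, b, c]) * (Matrix.of ![a, b, c]).transpose = 1 := by
    ext i j
    fin_cases i <;> fin_cases j <;>
      simp [Matrix.mul_apply, Matrix.transpose_apply, Matrix.vecHead, Matrix.vecTail, Fin.sum_univ_three,
        Matrix.one_apply] <;>
      first
      | linear_combination ha | linear_combination hb | linear_combination hc
      | linear_combination hab | linear_combination hac | linear_combination hbc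
  have h2 : (Matrix.of ![a, b, c]).transpose * (Matrix.of ![a, b, c]) = 1 :=
    mul_eq_one_comm.mp h1
  have key : ∀ x y : Fin 3 → ℝ,
      x 0 * y 0 + x 1 * y 1 + x 2 * y 2 =
      (a 0 * x 0 + a 1 * x 1 + a 2 * x 2) * (a 0 * y 0 + a 1 * y 1 + a 2 * y 2) +
      (b 0 * x 0 + b 1 * x 1 + b 2 * x 2) * (b 0 * y 0 + b 1 * y 1 + b 2 * y 2) +
      (c 0 * x 0 + c 1 * x 1 + c 2 * x 2) * (c 0 * y 0 + c 1 * y 1 + c 2 * y 2) := by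
    intro x y
    have e00 := congrFun (congrFun h2 0) 0
    have e01 := congrFun (congrFun h2 0) 1
    have e02 := congrFun (congrFun h2 0) 2
    have e11 := congrFun (congrFun h2 1) 1
    have e12 := congrFun (congrFun h2 1) 2
    have e22 := congrFun (congrFun h2 2) 2
    simp [Matrix.mul_apply, Matrix.transpose_apply, Matrix.vecHead, Matrix.vecTail, Fin.sum_univ_three,
      Matrix.one_apply] at e00 e01 e02 e11 e12 e22
    linear_combination -((x 0 * y 0) * e00 + (x 0 * y 1 + x 1 * y 0) * e01 +
      (x 0 * y 2 + x 2 * y 0) * e02 + (x 1 * y 1) * e11 +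
      (x 1 * y 2 + x 2 * y 1) * e12 + (x 2 * y 2) * e22)
  have kA := key A A
  have kΓ := key Γ Γ
  have kAB := key A B
  have hΓb2 : (b 0 * Γ 0 + b 1 * Γ 1 + b 2 * Γ 2) ^ 2 = 2 := by
    linear_combination hΓ - kΓ - (a 0 * Γ 0 + a 1 * Γ 1 + a 2 * Γ 2) * haΓ -
      (c 0 * Γ 0 + c 1 * Γ 1 + c 2 * Γ 2) * hcΓ
  have hAB : A 0 * B 0 + A 1 * B 1 + A 2 * B 2 = 0 := by
    linear_combination kAB + (a 0 * B 0 + a 1 * B 1 + a 2 * B 2) * haA +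
      (b 0 * B 0 + b 1 * B 1 + b 2 * B 2) * hbA +
      (c 0 * A 0 + c 1 * A 1 + c 2 * A 2) * hcB
  clear h1 h2 key kA kΓ kAB
  have hbΓ : b 0 * Γ 0 + b 1 * Γ 1 + b 2 * Γ 2 = 0 := by linarith
  rw [hbΓ] at hΓb2
  norm_num at hΓb2
end
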